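/- arXiv:1810.08235 — 11 statements merged into one kernel-verified Lean document; each statement's English description precedes it below -/
import Mathlib

section
/- For integers m, n ≥ 1 and 0 ≤ p ≤ q, the convolution sequence (r_i)_{i≥1} satisfies: r_i = i for 1 ≤ i ≤ p; r_i = p + ∑_{j=0}^{i-p-1} binomial(m,j) for p+1 ≤ i ≤ q; r_i = ∑_{j=0}^{i-q-1} binomial(n,j) + (q+p-i) + ∑_{j=0}^{i-p-1} binomial(m,j) for q+1 ≤ i ≤ q+p; r_i = ∑_{j=0}^{p-1} binomial(n, i-q-1-j) + binomial(m+n, i-q-p-1) + ∑_{j=0}^{q-1} binomial(m, i-p-1-j) for q+p+1 ≤ i ≤ q+p+m+n+1; and r_i = 0 for i > q+p+m+n+1. -/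
/-- The sequence of `p` ones followed by the binomial coefficients
`choose m 0, …, choose m m` and then zeros (indexed from 1; the value at 0 is 0). -/
def broomSeq (m p : ℕ) : ℕ → ℕ := fun i =>
  if 1 ≤ i ∧ i ≤ p then 1
  else if p + 1 ≤ i ∧ i ≤ p + m + 1 then Nat.choose m (i - p - 1)
  else 0

/-- The convolution `r_i = ∑_{j=1}^{i} s_j * t_{i+1-j}` of the two broom sequences. -/
def convSeq (m n p q : ℕ) : ℕ → ℕ := fun i =>
  ∑ j ∈ Finset.Icc 1 i, broomSeq m p j * broomSeq n q (i + 1 - j)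

/-- A sequence (indexed from 1) is unimodal if for some `k ≥ 1` it is
nondecreasing up to `k` and nonincreasing from `k` on. -/
def Unimodal (a : ℕ → ℕ) : Prop :=
  ∃ k : ℕ, 1 ≤ k ∧ (∀ i, 1 ≤ i → i < k → a i ≤ a (i + 1)) ∧ (∀ i, k ≤ i → a (i + 1) ≤ a i)

/-!
Write `r_i = ∑_{k<i} s_{k+1} t_{i-k}` and cut the range of `k` into blocks on which each
factor is given by one formula: `1` on the leading block of ones, a binomial coefficient after it.
A block where both factors are `1` counts its terms, a block where one factor is `1` is a partial
sum of a row of Pascal's triangle, and the block where both are binomial coefficients is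
Vandermonde's identity `∑_k C(m,k) C(n,L-k) = C(m+n,L)`.
-/

open Finset

section BroomSeq

variable {m p j : ℕ}

lemma broomSeq_eq_one (h₁ : 1 ≤ j) (h₂ : j ≤ p) : broomSeq m p j = 1 := by
  simp [broomSeq, h₁, h₂]

lemma broomSeq_eq_choose (h : p < j) : broomSeq m p j = m.choose (j - p - 1) := by
  rw [broomSeq, if_neg (by omega)]
  split_ifs
  · rfl
  · rw [Nat.choose_eq_zero_of_lt (by omega)]

lemma sum_range_broomSeq_succ_of_le {i : ℕ} (h : i ≤ p) :
    ∑ k ∈ range i, broomSeq m p (k + 1) = i := by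
  rw [sum_congr rfl fun k hk => broomSeq_eq_one (by omega) (by rw [mem_range] at hk; omega)]
  simp

lemma sum_range_broomSeq_succ_of_ge {i : ℕ} (h : p ≤ i) :
    ∑ k ∈ range i, broomSeq m p (k + 1) = p + ∑ k ∈ range (i - p), m.choose k := by
  obtain ⟨x, rfl⟩ := Nat.exists_eq_add_of_le h
  rw [sum_range_add, sum_range_broomSeq_succ_of_le le_rfl, Nat.add_sub_cancel_left]
  congr 1
  refine sum_congr rfl fun k _ => ?_
  rw [broomSeq_eq_choose (by omega)]
  congr 1
  omega

end BroomSeq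

section ConvSeq

variable {m n p q i : ℕ}

lemma convSeq_eq_sum_range :
    convSeq m n p q i = ∑ k ∈ range i, broomSeq m p (k + 1) * broomSeq n q (i - k) := by
  rw [convSeq, ← Ico_add_one_right_eq_Icc, sum_Ico_eq_sum_range, Nat.add_sub_cancel]
  refine sum_congr rfl fun k hk => ?_
  rw [add_comm 1 k]
  congr 2
  omega

lemma convSeq_of_le (h : i ≤ q) : convSeq m n p q i = ∑ k ∈ range i, broomSeq m p (k + 1) := by
  rw [convSeq_eq_sum_range]
  refine sum_congr rfl fun k hk => ?_
  rw [mem_range] at hk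
  rw [broomSeq_eq_one (j := i - k) (by omega) (by omega), mul_one]

lemma convSeq_of_lt_of_le (hpq : p ≤ q) (h₁ : q < i) (h₂ : i ≤ q + p) :
    convSeq m n p q i = (∑ k ∈ range (i - q), n.choose k) + (q + p - i)
      + ∑ k ∈ range (i - p), m.choose k := by
  obtain ⟨a, rfl⟩ : ∃ a, i = a + q := ⟨i - q, by omega⟩
  have hhead : ∑ k ∈ range a, broomSeq m p (k + 1) * broomSeq n q (a + q - k) =
      ∑ k ∈ range a, n.choose k := by
    rw [← sum_range_reflect]
    refine sum_congr rfl fun k hk => ?_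
    rw [mem_range] at hk
    rw [broomSeq_eq_one (by omega) (by omega), broomSeq_eq_choose (by omega), one_mul]
    congr 1
    omega
  have htail : ∑ k ∈ range q, broomSeq m p (a + k + 1) * broomSeq n q (a + q - (a + k)) =
      ∑ k ∈ range q, broomSeq m p (a + k + 1) := by
    refine sum_congr rfl fun k hk => ?_
    rw [mem_range] at hk
    rw [broomSeq_eq_one (j := a + q - (a + k)) (by omega) (by omega), mul_one]
  -- the remaining terms are the partial sum of `s` up to `i`, minus the `a` leading ones
  have hpartial := sum_range_broomSeq_succ_of_ge (m := m) (show p ≤ a + q by omega)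
  rw [sum_range_add, sum_range_broomSeq_succ_of_le (show a ≤ p by omega)] at hpartial
  rw [convSeq_eq_sum_range, sum_range_add, hhead, htail, Nat.add_sub_cancel]
  omega

lemma convSeq_of_lt (h : q + p < i) :
    convSeq m n p q i = (∑ k ∈ range p, n.choose (i - q - 1 - k))
      + (m + n).choose (i - q - p - 1) + ∑ k ∈ range q, m.choose (i - p - 1 - k) := by
  obtain ⟨l, rfl⟩ : ∃ l, i = p + (l + 1) + q := ⟨i - q - p - 1, by omega⟩
  rw [convSeq_eq_sum_range, sum_range_add, sum_range_add]
  congr 1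
  congr 1
  · refine sum_congr rfl fun k hk => ?_
    rw [mem_range] at hk
    rw [broomSeq_eq_one (by omega) (by omega), broomSeq_eq_choose (by omega), one_mul]
    congr 1
    omega
  · rw [show p + (l + 1) + q - q - p - 1 = l by omega, Nat.add_choose_eq,
      Nat.sum_antidiagonal_eq_sum_range_succ fun i j => m.choose i * n.choose j]
    refine sum_congr rfl fun k hk => ?_
    rw [mem_range] at hk
    rw [broomSeq_eq_choose (by omega), broomSeq_eq_choose (by omega)]
    congr 2 <;> omega
  · rw [← sum_range_reflect]
    refine sum_congr rfl fun k hk => ?_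
    rw [mem_range] at hk
    rw [broomSeq_eq_choose (by omega), broomSeq_eq_one (by omega) (by omega), mul_one]
    congr 1
    omega

lemma convSeq_eq_zero_of_lt (h : q + p + m + n + 1 < i) : convSeq m n p q i = 0 := by
  rw [convSeq_of_lt (by omega),
    sum_eq_zero fun k hk => Nat.choose_eq_zero_of_lt (by rw [mem_range] at hk; omega),
    sum_eq_zero fun k hk => Nat.choose_eq_zero_of_lt (by rw [mem_range] at hk; omega),
    Nat.choose_eq_zero_of_lt (by omega)]
  rfl

end ConvSeq

theorem convSeq_formula_general (m n p q : ℕ) (hpq : p ≤ q) :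
    (∀ i, 1 ≤ i → i ≤ p → convSeq m n p q i = i) ∧
    (∀ i, p + 1 ≤ i → i ≤ q →
      convSeq m n p q i = p + ∑ j ∈ Finset.range (i - p), Nat.choose m j) ∧
    (∀ i, q + 1 ≤ i → i ≤ q + p →
      convSeq m n p q i =
        (∑ j ∈ Finset.range (i - q), Nat.choose n j) + (q + p - i)
          + ∑ j ∈ Finset.range (i - p), Nat.choose m j) ∧
    (∀ i, q + p + 1 ≤ i → i ≤ q + p + m + n + 1 →
      convSeq m n p q i =
        (∑ j ∈ Finset.range p, Nat.choose n (i - q - 1 - j))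
          + Nat.choose (m + n) (i - q - p - 1)
          + ∑ j ∈ Finset.range q, Nat.choose m (i - p - 1 - j)) ∧
    (∀ i, q + p + m + n + 1 < i → convSeq m n p q i = 0) := by
  refine ⟨fun i _ hi => ?_, fun i hi hi' => ?_, fun i hi hi' => convSeq_of_lt_of_le hpq hi hi',
    fun i hi _ => convSeq_of_lt hi, fun i hi => convSeq_eq_zero_of_lt hi⟩
  · rw [convSeq_of_le (by omega), sum_range_broomSeq_succ_of_le hi]
  · rw [convSeq_of_le hi', sum_range_broomSeq_succ_of_ge (by omega)]

theorem convSeq_formula (m n p q : ℕ) (hm : 1 ≤ m) (hn : 1 ≤ n) (hpq : p ≤ q) :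
    (∀ i, 1 ≤ i → i ≤ p → convSeq m n p q i = i) ∧
    (∀ i, p + 1 ≤ i → i ≤ q →
      convSeq m n p q i = p + ∑ j ∈ Finset.range (i - p), Nat.choose m j) ∧
    (∀ i, q + 1 ≤ i → i ≤ q + p →
      convSeq m n p q i =
        (∑ j ∈ Finset.range (i - q), Nat.choose n j) + (q + p - i)
          + ∑ j ∈ Finset.range (i - p), Nat.choose m j) ∧
    (∀ i, q + p + 1 ≤ i → i ≤ q + p + m + n + 1 →
      convSeq m n p q i =
        (∑ j ∈ Finset.range p, Nat.choose n (i - q - 1 - j))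
          + Nat.choose (m + n) (i - q - p - 1)
          + ∑ j ∈ Finset.range q, Nat.choose m (i - p - 1 - j)) ∧
    (∀ i, q + p + m + n + 1 < i → convSeq m n p q i = 0) :=
  convSeq_formula_general m n p q hpq
end

section
/- For integers m, n, p, q ≥ 1 with p ≤ q, the first differences d_i = r_i − r_{i-1} (computed in ℤ) of the convolution sequence satisfy: d_i = 1 for 2 ≤ i ≤ p; d_i = binomial(m, i-p-1) for p+1 ≤ i ≤ q; d_i = binomial(n, i-q-1) − 1 + binomial(m, i-p-1) for q+1 ≤ i ≤ q+p; and d_i = binomial(n, i-q-1) − binomial(n, i-q-p-1) + binomial(m+n, i-q-p-1) − binomial(m+n, i-q-p-2) + binomial(m, i-p-1) − binomial(m, i-q-p-1) for q+p+1 ≤ i ≤ q+p+m+n+1. -/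
/-- Binomial coefficient with an integer lower index, zero when the lower index is negative. -/
def chooseZ (a : ℕ) (b : ℤ) : ℤ := if 0 ≤ b then (a.choose b.toNat : ℤ) else 0

open Finset

lemma broom_zero (m p : ℕ) : broomSeq m p 0 = 0 := by simp [broomSeq]

lemma broom_one (m p : ℕ) {i : ℕ} (h1 : 1 ≤ i) (h2 : i ≤ p) : broomSeq m p i = 1 := by
  simp [broomSeq, h1, h2]

lemma broom_choose (m p : ℕ) {i : ℕ} (h : p + 1 ≤ i) :
    broomSeq m p i = Nat.choose m (i - p - 1) := by
  unfold broomSeq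
  rcases le_or_gt i (p + m + 1) with h2 | h2
  · rw [if_neg (by omega), if_pos ⟨h, h2⟩]
  · rw [if_neg (by omega), if_neg (by omega), eq_comm, Nat.choose_eq_zero_of_lt (by omega)]

def dT (n q : ℕ) : ℕ → ℤ := fun k => (broomSeq n q k : ℤ) - broomSeq n q (k - 1)

lemma dT_one (n q : ℕ) (hq : 1 ≤ q) : dT n q 1 = 1 := by
  simp [dT, broom_one n q le_rfl hq, broom_zero]

lemma dT_mid (n q : ℕ) {k : ℕ} (hq : 1 ≤ q) (h1 : 2 ≤ k) (h2 : k ≤ q + 1) : dT n q k = 0 := by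
  unfold dT
  rcases le_or_gt k q with h | h
  · rw [broom_one n q (by omega) h, broom_one n q (by omega) (by omega)]; ring
  · have hk : k = q + 1 := by omega
    subst hk
    rw [broom_choose n q le_rfl, show q + 1 - 1 = q from rfl, broom_one n q hq le_rfl]
    simp

lemma dT_choose (n q : ℕ) {k : ℕ} (h : q + 2 ≤ k) :
    dT n q k = (Nat.choose n (k - q - 1) : ℤ) - Nat.choose n (k - q - 2) := by
  unfold dT
  rw [broom_choose n q (by omega), broom_choose n q (by omega),
    show k - 1 - q - 1 = k - q - 2 by omega]

lemma dT_tel (n q a : ℕ) : ∀ b, a ≤ b →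
    ∑ k ∈ Ioc a b, dT n q k = (broomSeq n q b : ℤ) - broomSeq n q a := by
  intro b
  induction b with
  | zero => intro h; interval_cases a; simp
  | succ b ih =>
    intro h
    rcases Nat.lt_or_ge a (b + 1) with h' | h'
    · rw [Finset.sum_Ioc_succ_top (by omega), ih (by omega), dT]
      simp only [Nat.add_sub_cancel]
      ring
    · have : a = b + 1 := by omega
      subst this
      simp

lemma diff_eq (m n p q i : ℕ) (hq : 1 ≤ q) (hi : 1 ≤ i) :
    (convSeq m n p q i : ℤ) - convSeq m n p q (i - 1) =
      ∑ j ∈ Icc 1 i, (broomSeq m p j : ℤ) * dT n q (i + 1 - j) := by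
  obtain ⟨c, rfl⟩ : ∃ c, i = c + 1 := ⟨i - 1, by omega⟩
  unfold convSeq
  simp only [Nat.add_sub_cancel]
  have h2 : ∑ j ∈ Icc 1 c, broomSeq m p j * broomSeq n q (c + 1 - j)
      = ∑ j ∈ Icc 1 (c + 1), broomSeq m p j * broomSeq n q (c + 1 - j) := by
    rw [Finset.sum_Icc_succ_top (by omega)]
    simp [broom_zero]
  rw [h2]
  push_cast
  rw [← Finset.sum_sub_distrib]
  apply Finset.sum_congr rfl
  intro j hj
  simp only [dT, show c + 1 + 1 - j - 1 = c + 1 - j by omega]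
  ring

lemma S_eq (m n p q i : ℕ) (hq : 1 ≤ q) (hi : 1 ≤ i) :
    ∑ j ∈ Icc 1 i, (broomSeq m p j : ℤ) * dT n q (i + 1 - j) =
      (broomSeq m p i : ℤ) + ∑ k ∈ Ioc (q + 1) i, (broomSeq m p (i + 1 - k) : ℤ) * dT n q k := by
  have hre : ∑ j ∈ Icc 1 i, (broomSeq m p j : ℤ) * dT n q (i + 1 - j)
      = ∑ k ∈ Icc 1 i, (broomSeq m p (i + 1 - k) : ℤ) * dT n q k := by
    apply Finset.sum_nbij' (fun j => i + 1 - j) (fun k => i + 1 - k)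
    · intro a ha; simp only [Finset.mem_Icc] at *; omega
    · intro a ha; simp only [Finset.mem_Icc] at *; omega
    · intro a ha; simp only [Finset.mem_Icc] at ha; omega
    · intro a ha; simp only [Finset.mem_Icc] at ha; omega
    · intro a ha; simp only [Finset.mem_Icc] at ha
      rw [show i + 1 - (i + 1 - a) = a by omega]
  rw [hre]
  have hsub : insert 1 (Ioc (q + 1) i) ⊆ Icc 1 i := by
    intro k hk
    simp only [Finset.mem_insert, Finset.mem_Ioc, Finset.mem_Icc] at *
    omega
  rw [← Finset.sum_subset hsub (fun k hk hk2 => by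
    simp only [Finset.mem_insert, Finset.mem_Ioc, Finset.mem_Icc] at hk hk2
    rw [dT_mid n q hq (by omega) (by omega), mul_zero])]
  rw [Finset.sum_insert (by simp), dT_one n q hq]
  simp

lemma vand (m n K : ℕ) :
    ∑ j ∈ Finset.range (K + 1), m.choose (K - j) * n.choose j = (m + n).choose K := by
  rw [Nat.add_choose_eq, Finset.Nat.sum_antidiagonal_eq_sum_range_succ_mk,
    ← Finset.sum_range_reflect]
  apply Finset.sum_congr rfl
  intro j hj
  simp only [Finset.mem_range] at hj
  congr 2 <;> omega

lemma vand_sum (m n K : ℕ) :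
    ∑ j ∈ Icc 1 K, (m.choose (K - j) : ℤ) * ((n.choose j : ℤ) - n.choose (j - 1)) =
      ((m + n).choose K : ℤ) - m.choose K - chooseZ (m + n) ((K : ℤ) - 1) := by
  have hIcc : ∀ f : ℕ → ℤ, ∑ j ∈ Icc 1 K, f j = ∑ j ∈ Finset.range K, f (j + 1) := by
    intro f
    rw [show Icc 1 K = Ico 1 (K + 1) by rw [Finset.Ico_add_one_right_eq_Icc], Finset.sum_Ico_eq_sum_range]
    simp [add_comm]
  simp only [mul_sub]
  rw [Finset.sum_sub_distrib, hIcc, hIcc]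
  have hA : ∑ j ∈ Finset.range K, (m.choose (K - (j + 1)) : ℤ) * n.choose (j + 1)
      = ((m + n).choose K : ℤ) - m.choose K := by
    have := vand m n K
    rw [Finset.sum_range_succ'] at this
    push_cast [← this]
    simp
  rw [hA]
  have hB : ∑ j ∈ Finset.range K, (m.choose (K - (j + 1)) : ℤ) * n.choose (j + 1 - 1)
      = chooseZ (m + n) ((K : ℤ) - 1) := by
    cases K with
    | zero => simp [chooseZ]
    | succ K' =>
      have : chooseZ (m + n) ((↑(K' + 1) : ℤ) - 1) = ((m + n).choose K' : ℤ) := by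
        simp [chooseZ]
      rw [this, ← vand m n K']
      push_cast
      rfl
  rw [hB]

theorem convSeq_first_differences (m n p q : ℕ)
    (hm : 1 ≤ m) (hn : 1 ≤ n) (hp : 1 ≤ p) (hq : 1 ≤ q) (hpq : p ≤ q) :
    (∀ i, 2 ≤ i → i ≤ p →
      (convSeq m n p q i : ℤ) - convSeq m n p q (i - 1) = 1) ∧
    (∀ i, p + 1 ≤ i → i ≤ q →
      (convSeq m n p q i : ℤ) - convSeq m n p q (i - 1) = Nat.choose m (i - p - 1)) ∧
    (∀ i, q + 1 ≤ i → i ≤ q + p →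
      (convSeq m n p q i : ℤ) - convSeq m n p q (i - 1) =
        (Nat.choose n (i - q - 1) : ℤ) - 1 + Nat.choose m (i - p - 1)) ∧
    (∀ i, q + p + 1 ≤ i → i ≤ q + p + m + n + 1 →
      (convSeq m n p q i : ℤ) - convSeq m n p q (i - 1) =
        (Nat.choose n (i - q - 1) : ℤ) - Nat.choose n (i - q - p - 1)
          + Nat.choose (m + n) (i - q - p - 1) - chooseZ (m + n) ((i : ℤ) - q - p - 2)
          + Nat.choose m (i - p - 1) - Nat.choose m (i - q - p - 1)) := by
  refine ⟨?_, ?_, ?_, ?_⟩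
  · intro i h1 h2
    rw [diff_eq m n p q i hq (by omega), S_eq m n p q i hq (by omega),
      Finset.Ioc_eq_empty (by omega), Finset.sum_empty, broom_one m p (by omega) h2]
    simp
  · intro i h1 h2
    rw [diff_eq m n p q i hq (by omega), S_eq m n p q i hq (by omega),
      Finset.Ioc_eq_empty (by omega), Finset.sum_empty, broom_choose m p h1]
    simp
  · intro i h1 h2
    rw [diff_eq m n p q i hq (by omega), S_eq m n p q i hq (by omega)]
    have hcongr : ∀ k ∈ Ioc (q + 1) i, (broomSeq m p (i + 1 - k) : ℤ) * dT n q k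
        = dT n q k := by
      intro k hk
      simp only [Finset.mem_Ioc] at hk
      rw [broom_one m p (by omega) (by omega)]
      ring
    rw [Finset.sum_congr rfl hcongr, dT_tel n q (q + 1) i (by omega),
      broom_choose n q (by omega), broom_choose n q le_rfl,
      show q + 1 - q - 1 = 0 by omega, Nat.choose_zero_right,
      broom_choose m p (by omega)]
    push_cast
    ring
  · intro i h1 h2
    rw [diff_eq m n p q i hq (by omega), S_eq m n p q i hq (by omega)]
    set K := i - q - p - 1 with hK
    have hsplit : ∑ k ∈ Ioc (q + 1) (i - p), (broomSeq m p (i + 1 - k) : ℤ) * dT n q k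
        + ∑ k ∈ Ioc (i - p) i, (broomSeq m p (i + 1 - k) : ℤ) * dT n q k
        = ∑ k ∈ Ioc (q + 1) i, (broomSeq m p (i + 1 - k) : ℤ) * dT n q k :=
      Finset.sum_Ioc_consecutive _ (by omega) (by omega)
    rw [← hsplit]
    have hB : ∑ k ∈ Ioc (i - p) i, (broomSeq m p (i + 1 - k) : ℤ) * dT n q k
        = (Nat.choose n (i - q - 1) : ℤ) - Nat.choose n (i - q - p - 1) := by
      have hcongr : ∀ k ∈ Ioc (i - p) i, (broomSeq m p (i + 1 - k) : ℤ) * dT n q k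
          = dT n q k := by
        intro k hk
        simp only [Finset.mem_Ioc] at hk
        rw [broom_one m p (by omega) (by omega)]
        ring
      rw [Finset.sum_congr rfl hcongr, dT_tel n q (i - p) i (by omega),
        broom_choose n q (by omega), broom_choose n q (by omega),
        show i - p - q - 1 = i - q - p - 1 by omega]
    have hA : ∑ k ∈ Ioc (q + 1) (i - p), (broomSeq m p (i + 1 - k) : ℤ) * dT n q k
        = ((m + n).choose K : ℤ) - Nat.choose m K - chooseZ (m + n) ((K : ℤ) - 1) := by
      have hre : ∑ k ∈ Ioc (q + 1) (i - p), (broomSeq m p (i + 1 - k) : ℤ) * dT n q k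
          = ∑ j ∈ Icc 1 K, (Nat.choose m (K - j) : ℤ) *
              ((Nat.choose n j : ℤ) - Nat.choose n (j - 1)) := by
        apply Finset.sum_nbij' (fun k => k - q - 1) (fun j => j + q + 1)
        · intro a ha; simp only [Finset.mem_Ioc, Finset.mem_Icc] at *; omega
        · intro a ha; simp only [Finset.mem_Ioc, Finset.mem_Icc] at *; omega
        · intro a ha; simp only [Finset.mem_Ioc] at ha; omega
        · intro a ha; simp only [Finset.mem_Icc] at ha; omega
        · intro a ha; simp only [Finset.mem_Ioc] at ha
          rw [broom_choose m p (by omega), dT_choose n q (by omega),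
            show i + 1 - a - p - 1 = K - (a - q - 1) by omega,
            show a - q - 2 = a - q - 1 - 1 by omega]
      rw [hre, vand_sum]
    rw [hA, hB, broom_choose m p (by omega)]
    have hcz : chooseZ (m + n) ((K : ℤ) - 1) = chooseZ (m + n) ((i : ℤ) - q - p - 2) := by
      congr 1
      omega
    rw [hcz, hK]
    ring
end

section
/- For integers m, n, p, q ≥ 1 and any integer j ≥ 0, the first difference of the convolution sequence at index i = p+q+j+1 satisfies (in ℤ): r_{p+q+j+1} − r_{p+q+j} = binomial(n, j+p) − binomial(n, j) + binomial(m+n, j) − binomial(m+n, j−1) + binomial(m, j+q) − binomial(m, j). -/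
lemma broomSeq_le' (m p i : ℕ) (h1 : 1 ≤ i) (h2 : i ≤ p) : broomSeq m p i = 1 := by
  unfold broomSeq; rw [if_pos ⟨h1, h2⟩]

lemma broomSeq_ge' (m p i : ℕ) (h : p + 1 ≤ i) : broomSeq m p i = m.choose (i - p - 1) := by
  unfold broomSeq
  rcases le_or_gt i (p + m + 1) with h' | h'
  · rw [if_neg (by omega), if_pos ⟨h, h'⟩]
  · rw [if_neg (by omega), if_neg (by omega), Nat.choose_eq_zero_of_lt (by omega)]

lemma convSeq_eval (m n p q : ℕ) (hp : 1 ≤ p) (hq : 1 ≤ q) (j : ℕ) :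
    convSeq m n p q (p + q + j) =
      (∑ k ∈ Finset.range p, n.choose (j + k))
      + ((∑ k ∈ Finset.range j, m.choose k * n.choose (j - 1 - k))
      + ∑ k ∈ Finset.range q, m.choose (j + k)) := by
  unfold convSeq
  rw [← Finset.Ico_add_one_right_eq_Icc, Finset.sum_Ico_eq_sum_range]
  have e : p + q + j + 1 - 1 = p + (j + q) := by omega
  rw [e, Finset.sum_range_add, Finset.sum_range_add]
  congr 1
  · -- first piece
      rw [← Finset.sum_range_reflect (fun k => n.choose (j + k)) p]
      refine Finset.sum_congr rfl fun x hx => ?_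
      simp only [Finset.mem_range] at hx
      rw [broomSeq_le' m p (1 + x) (by omega) (by omega), one_mul,
        show p + q + j + 1 - (1 + x) = q + 1 + (j + (p - 1 - x)) from by omega,
        broomSeq_ge' n q _ (by omega),
        show q + 1 + (j + (p - 1 - x)) - q - 1 = j + (p - 1 - x) from by omega]
  · congr 1
    · -- middle piece
      refine Finset.sum_congr rfl fun x hx => ?_
      simp only [Finset.mem_range] at hx
      rw [broomSeq_ge' m p (1 + (p + x)) (by omega),
        show 1 + (p + x) - p - 1 = x from by omega,
        show p + q + j + 1 - (1 + (p + x)) = q + 1 + (j - 1 - x) from by omega,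
        broomSeq_ge' n q _ (by omega),
        show q + 1 + (j - 1 - x) - q - 1 = j - 1 - x from by omega]
    · -- third piece
      refine Finset.sum_congr rfl fun x hx => ?_
      simp only [Finset.mem_range] at hx
      rw [broomSeq_ge' m p (1 + (p + (j + x))) (by omega),
        show 1 + (p + (j + x)) - p - 1 = j + x from by omega,
        broomSeq_le' n q (p + q + j + 1 - (1 + (p + (j + x)))) (by omega) (by omega), mul_one]

lemma shift_sum (f : ℕ → ℕ) (a b : ℕ) :
    (∑ k ∈ Finset.range b, (f (a + 1 + k) : ℤ)) =
      ∑ k ∈ Finset.range b, (f (a + k) : ℤ) + f (a + b) - f a := by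
  have h1 := Finset.sum_range_succ (fun k => (f (a + k) : ℤ)) b
  have h2 := Finset.sum_range_succ' (fun k => (f (a + k) : ℤ)) b
  have h3 : (∑ k ∈ Finset.range b, (f (a + (k + 1)) : ℤ)) =
      ∑ k ∈ Finset.range b, (f (a + 1 + k) : ℤ) :=
    Finset.sum_congr rfl fun k _ => by rw [show a + (k + 1) = a + 1 + k from by omega]
  simp only [add_zero] at h2
  rw [h3] at h2
  linarith

lemma vandermonde (m n j : ℕ) :
    ((m + n).choose j : ℕ) = ∑ k ∈ Finset.range (j + 1), m.choose k * n.choose (j - k) := by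
  rw [Nat.add_choose_eq, Finset.Nat.sum_antidiagonal_eq_sum_range_succ_mk]

theorem convSeq_difference_shifted (m n p q : ℕ)
    (hm : 1 ≤ m) (hn : 1 ≤ n) (hp : 1 ≤ p) (hq : 1 ≤ q) (j : ℕ) :
    (convSeq m n p q (p + q + j + 1) : ℤ) - convSeq m n p q (p + q + j) =
      (Nat.choose n (j + p) : ℤ) - Nat.choose n j
        + Nat.choose (m + n) j - chooseZ (m + n) ((j : ℤ) - 1)
        + Nat.choose m (j + q) - Nat.choose m j := by
  have A := convSeq_eval m n p q hp hq j
  have B := convSeq_eval m n p q hp hq (j + 1)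
  rw [show p + q + (j + 1) = p + q + j + 1 from by omega] at B
  rw [A, B]
  push_cast
  have hB1 : (∑ k ∈ Finset.range p, ((n.choose (j + 1 + k)) : ℤ)) =
      ∑ k ∈ Finset.range p, (n.choose (j + k) : ℤ) + n.choose (j + p) - n.choose j :=
    shift_sum (n.choose) j p
  have hB3 : (∑ k ∈ Finset.range q, ((m.choose (j + 1 + k)) : ℤ)) =
      ∑ k ∈ Finset.range q, (m.choose (j + k) : ℤ) + m.choose (j + q) - m.choose j :=
    shift_sum (m.choose) j q
  have hB2 : (∑ k ∈ Finset.range (j + 1), ((m.choose k : ℤ) * n.choose (j - k))) =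
      ((m + n).choose j : ℤ) := by
    exact_mod_cast (vandermonde m n j).symm
  have hA2 : (∑ k ∈ Finset.range j, ((m.choose k : ℤ) * n.choose (j - 1 - k))) =
      chooseZ (m + n) ((j : ℤ) - 1) := by
    cases j with
    | zero => simp [chooseZ]
    | succ j' =>
      have h : (((j' + 1 : ℕ) : ℤ)) - 1 = (j' : ℤ) := by push_cast; ring
      rw [h, show chooseZ (m + n) (j' : ℤ) = ((m + n).choose j' : ℤ) by simp [chooseZ]]
      have : ∀ k ∈ Finset.range (j' + 1), ((m.choose k : ℤ) * n.choose (j' + 1 - 1 - k)) =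
          (m.choose k : ℤ) * n.choose (j' - k) := fun k _ => by
        rw [show j' + 1 - 1 - k = j' - k from by omega]
      rw [Finset.sum_congr rfl this]
      exact_mod_cast (vandermonde m n j').symm
  rw [hB1, hB3]
  rw [show (∑ x ∈ Finset.range (j + 1), ((m.choose x : ℤ) * n.choose (j - x))) =
    ((m + n).choose j : ℤ) from hB2, hA2]
  ring
end

section
/- For integers m ≥ n ≥ 1 and p, q ≥ 1, if either (m ≥ n ≥ 3) or (m > n = 2), and if q ≥ m and p ≥ n, then the convolution sequence (r_i)_{i≥1} is not unimodal. -/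
open Finset

lemma conv_eval (m n p q d : ℕ) (hn : 2 ≤ n) (hnm : n ≤ m) (hq : m ≤ q) (hp : n ≤ p)
    (hd : d ≤ 2) :
    convSeq m n p q (p + q + 1 + d) =
      (∑ b ∈ Ico (d + 1) (n + 1), Nat.choose n b)
      + (∑ a ∈ range (d + 1), Nat.choose m a * Nat.choose n (d - a))
      + (∑ a ∈ Ico (d + 1) (m + 1), Nat.choose m a) := by
  obtain ⟨e, rfl⟩ := Nat.exists_eq_add_of_le hp
  obtain ⟨f, rfl⟩ := Nat.exists_eq_add_of_le hq
  unfold convSeq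
  rw [← Finset.Ico_add_one_right_eq_Icc]
  rw [← Finset.sum_Ico_consecutive _ (show (1:ℕ) ≤ e + 1 + d by omega)
        (show e + 1 + d ≤ (n + e + (m + f) + 1 + d) + 1 by omega)]
  rw [← Finset.sum_Ico_consecutive _ (show e + 1 + d ≤ n + e + 1 by omega)
        (show n + e + 1 ≤ (n + e + (m + f) + 1 + d) + 1 by omega)]
  rw [← Finset.sum_Ico_consecutive _ (show n + e + 1 ≤ n + e + 2 + d by omega)
        (show n + e + 2 + d ≤ (n + e + (m + f) + 1 + d) + 1 by omega)]
  rw [← Finset.sum_Ico_consecutive _ (show n + e + 2 + d ≤ n + e + m + 2 by omega)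
        (show n + e + m + 2 ≤ (n + e + (m + f) + 1 + d) + 1 by omega)]
  have hA : ∑ j ∈ Ico 1 (e + 1 + d),
      broomSeq m (n + e) j * broomSeq n (m + f) (n + e + (m + f) + 1 + d + 1 - j) = 0 := by
    apply Finset.sum_eq_zero
    intro j hj
    rw [Finset.mem_Ico] at hj
    have h2 : broomSeq n (m + f) (n + e + (m + f) + 1 + d + 1 - j) = 0 := by
      simp only [broomSeq]
      rw [if_neg (by omega), if_neg (by omega)]
    rw [h2, mul_zero]
  have hB : ∑ j ∈ Ico (e + 1 + d) (n + e + 1),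
      broomSeq m (n + e) j * broomSeq n (m + f) (n + e + (m + f) + 1 + d + 1 - j)
      = ∑ b ∈ Ico (d + 1) (n + 1), Nat.choose n b := by
    have step : ∑ j ∈ Ico (e + 1 + d) (n + e + 1),
        broomSeq m (n + e) j * broomSeq n (m + f) (n + e + (m + f) + 1 + d + 1 - j)
        = ∑ j ∈ Ico (e + 1 + d) (n + e + 1), Nat.choose n (n + e + 1 + d - j) := by
      apply Finset.sum_congr rfl
      intro j hj
      rw [Finset.mem_Ico] at hj
      simp only [broomSeq]
      rw [if_pos (by omega), if_neg (by omega), if_pos (by omega), one_mul]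
      congr 1
      omega
    rw [step, Finset.sum_Ico_eq_sum_range, Finset.sum_Ico_eq_sum_range,
      show n + e + 1 - (e + 1 + d) = n - d by omega, show n + 1 - (d + 1) = n - d by omega,
      ← Finset.sum_range_reflect (fun i => Nat.choose n (d + 1 + i)) (n - d)]
    apply Finset.sum_congr rfl
    intro i hi
    rw [Finset.mem_range] at hi
    congr 1
    omega
  have hC : ∑ j ∈ Ico (n + e + 1) (n + e + 2 + d),
      broomSeq m (n + e) j * broomSeq n (m + f) (n + e + (m + f) + 1 + d + 1 - j)
      = ∑ a ∈ range (d + 1), Nat.choose m a * Nat.choose n (d - a) := by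
    rw [Finset.sum_Ico_eq_sum_range, show n + e + 2 + d - (n + e + 1) = d + 1 by omega]
    apply Finset.sum_congr rfl
    intro i hi
    rw [Finset.mem_range] at hi
    simp only [broomSeq]
    rw [if_neg (by omega), if_pos (by omega), if_neg (by omega), if_pos (by omega)]
    congr 1
    · congr 1; omega
    · congr 1; omega
  have hD : ∑ j ∈ Ico (n + e + 2 + d) (n + e + m + 2),
      broomSeq m (n + e) j * broomSeq n (m + f) (n + e + (m + f) + 1 + d + 1 - j)
      = ∑ a ∈ Ico (d + 1) (m + 1), Nat.choose m a := by
    rw [Finset.sum_Ico_eq_sum_range, Finset.sum_Ico_eq_sum_range]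
    rw [show n + e + m + 2 - (n + e + 2 + d) = m - d by omega,
        show m + 1 - (d + 1) = m - d by omega]
    apply Finset.sum_congr rfl
    intro i hi
    rw [Finset.mem_range] at hi
    simp only [broomSeq]
    rw [if_neg (by omega), if_pos (by omega), if_pos (by omega), mul_one]
    congr 1; omega
  have hE : ∑ j ∈ Ico (n + e + m + 2) ((n + e + (m + f) + 1 + d) + 1),
      broomSeq m (n + e) j * broomSeq n (m + f) (n + e + (m + f) + 1 + d + 1 - j) = 0 := by
    apply Finset.sum_eq_zero
    intro j hj
    rw [Finset.mem_Ico] at hj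
    have h1 : broomSeq m (n + e) j = 0 := by
      simp only [broomSeq]
      rw [if_neg (by omega), if_neg (by omega)]
    rw [h1, zero_mul]
  rw [hA, hB, hC, hD, hE]
  omega

theorem convSeq_not_unimodal (m n p q : ℕ) (hn : 1 ≤ n) (hmn : n ≤ m)
    (hp1 : 1 ≤ p) (hq1 : 1 ≤ q)
    (h : 3 ≤ n ∨ (n = 2 ∧ 2 < m)) (hq : m ≤ q) (hp : n ≤ p) :
    ¬ Unimodal (convSeq m n p q) := by
  have hn2 : 2 ≤ n := by omega
  have hm2 : 2 ≤ m := by omega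
  have key0 := conv_eval m n p q 0 hn2 hmn hq hp (by omega)
  have key1 := conv_eval m n p q 1 hn2 hmn hq hp (by omega)
  have key2 := conv_eval m n p q 2 hn2 hmn hq hp (by omega)
  rw [show p + q + 1 + 0 = p + q + 1 by ring] at key0
  rw [show p + q + 1 + 1 = p + q + 2 by ring] at key1
  rw [show p + q + 1 + 2 = p + q + 3 by ring] at key2
  -- peel the head terms of the tail sums so all keys share atoms
  rw [Finset.sum_eq_sum_Ico_succ_bot (show (1:ℕ) < n + 1 by omega),
      Finset.sum_eq_sum_Ico_succ_bot (show (2:ℕ) < n + 1 by omega),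
      Finset.sum_eq_sum_Ico_succ_bot (show (1:ℕ) < m + 1 by omega),
      Finset.sum_eq_sum_Ico_succ_bot (show (2:ℕ) < m + 1 by omega)] at key0
  rw [Finset.sum_eq_sum_Ico_succ_bot (show (2:ℕ) < n + 1 by omega),
      Finset.sum_eq_sum_Ico_succ_bot (show (2:ℕ) < m + 1 by omega)] at key1
  simp only [Finset.sum_range_succ, Finset.sum_range_zero, Nat.choose_zero_right,
    Nat.choose_one_right, Nat.choose_self, Nat.sub_self] at key0 key1 key2
  norm_num at key0 key1 key2
  -- now key0, key1, key2 express r1, r2, r3 with shared atoms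
  have hmul : m + n < m * n := by
    rcases h with h3 | ⟨hneq, hm3⟩
    · nlinarith
    · subst hneq; nlinarith
  rintro ⟨k, hk1, hup, hdown⟩
  rcases le_or_gt k (p + q + 2) with hk | hk
  · have hd := hdown (p + q + 2) hk
    rw [show p + q + 2 + 1 = p + q + 3 by ring] at hd
    -- r3 ≤ r2, but r3 + m + n = r2 + m*n with m*n > m+n
    have hsub : Nat.choose n (2 - 1) = n := by norm_num
    omega
  · have hu := hup (p + q + 1) (by omega) (by omega)
    rw [show p + q + 1 + 1 = p + q + 2 by ring] at hu
    -- r1 ≤ r2, but r1 = r2 + 1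
    omega
end

section
/- For integers m ≥ n ≥ 2 and p, q ≥ 1 with q ≥ m and p ≥ n, the convolution sequence satisfies (in ℤ): r_{q+p+2} − r_{q+p+1} = −1 and r_{q+p+3} − r_{q+p+2} = m·n − m − n. -/
open Finset

lemma broom_zero_of_gt (n q x : ℕ) (h : q + n + 1 < x) : broomSeq n q x = 0 := by
  unfold broomSeq
  rw [if_neg (by omega), if_neg (by omega)]

lemma broom_one_s7 (n q x : ℕ) (h1 : 1 ≤ x) (h2 : x ≤ q) : broomSeq n q x = 1 := by
  unfold broomSeq
  rw [if_pos ⟨h1, h2⟩]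

lemma broom_choose_s7 (n q x : ℕ) (h1 : q + 1 ≤ x) (h2 : x ≤ q + n + 1) :
    broomSeq n q x = Nat.choose n (x - q - 1) := by
  unfold broomSeq
  rw [if_neg (by omega), if_pos ⟨h1, h2⟩]

lemma broom_val (n q d e : ℕ) (he : e ≤ q) (hd : d ≤ n) :
    broomSeq n q (q + 1 + d - e) = Nat.choose n (d - e) := by
  rcases le_or_gt e d with h | h
  · rw [broom_choose_s7 n q _ (by omega) (by omega)]
    congr 1
    omega
  · rw [broom_one_s7 n q _ (by omega) (by omega),
      Nat.sub_eq_zero_of_le (le_of_lt h), Nat.choose_zero_right]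

lemma convSeq_val (m n p q d : ℕ) (hd : d ≤ n) (hp : n ≤ p) (hq : m ≤ q) :
    convSeq m n p q (q + p + 1 + d) =
      (∑ i ∈ range (n - d), Nat.choose n i) +
      ∑ e ∈ range (m + 1), Nat.choose m e * Nat.choose n (d - e) := by
  unfold convSeq
  have hIcc : Finset.Icc 1 (q + p + 1 + d) = Finset.Ioc 0 (q + p + 1 + d) := by
    ext x; simp [Finset.mem_Icc, Finset.mem_Ioc]; omega
  rw [hIcc]
  have split1 : ∑ j ∈ Ioc 0 (q + p + 1 + d),
        broomSeq m p j * broomSeq n q (q + p + 1 + d + 1 - j)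
      = (∑ j ∈ Ioc 0 (p + m + 1), broomSeq m p j * broomSeq n q (q + p + 1 + d + 1 - j))
        + ∑ j ∈ Ioc (p + m + 1) (q + p + 1 + d),
            broomSeq m p j * broomSeq n q (q + p + 1 + d + 1 - j) :=
    (Finset.sum_Ioc_consecutive _ (by omega) (by omega)).symm
  have split2 : ∑ j ∈ Ioc 0 (p + m + 1),
        broomSeq m p j * broomSeq n q (q + p + 1 + d + 1 - j)
      = (∑ j ∈ Ioc 0 p, broomSeq m p j * broomSeq n q (q + p + 1 + d + 1 - j))
        + ∑ j ∈ Ioc p (p + m + 1),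
            broomSeq m p j * broomSeq n q (q + p + 1 + d + 1 - j) :=
    (Finset.sum_Ioc_consecutive _ (by omega) (by omega)).symm
  have split3 : ∑ j ∈ Ioc 0 p,
        broomSeq m p j * broomSeq n q (q + p + 1 + d + 1 - j)
      = (∑ j ∈ Ioc 0 (p + d - n), broomSeq m p j * broomSeq n q (q + p + 1 + d + 1 - j))
        + ∑ j ∈ Ioc (p + d - n) p,
            broomSeq m p j * broomSeq n q (q + p + 1 + d + 1 - j) :=
    (Finset.sum_Ioc_consecutive _ (by omega) (by omega)).symm
  rw [split1, split2, split3]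
  have s4 : ∑ j ∈ Ioc (p + m + 1) (q + p + 1 + d),
      broomSeq m p j * broomSeq n q (q + p + 1 + d + 1 - j) = 0 := by
    apply Finset.sum_eq_zero
    intro j hj
    simp only [Finset.mem_Ioc] at hj
    rw [broom_zero_of_gt m p _ (by omega), zero_mul]
  have s1 : ∑ j ∈ Ioc 0 (p + d - n),
      broomSeq m p j * broomSeq n q (q + p + 1 + d + 1 - j) = 0 := by
    apply Finset.sum_eq_zero
    intro j hj
    simp only [Finset.mem_Ioc] at hj
    rw [broom_zero_of_gt n q _ (by omega), mul_zero]
  have s2 : ∑ j ∈ Ioc (p + d - n) p,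
      broomSeq m p j * broomSeq n q (q + p + 1 + d + 1 - j)
      = ∑ i ∈ range (n - d), Nat.choose n i := by
    have hset : Ioc (p + d - n) p = Ico (p + d - n + 1) (p + 1) := by
      ext x; simp [Finset.mem_Ioc, Finset.mem_Ico]
    rw [hset, Finset.sum_Ico_eq_sum_range,
      show p + 1 - (p + d - n + 1) = n - d from by omega]
    apply Finset.sum_congr rfl
    intro i hi
    simp only [Finset.mem_range] at hi
    rw [broom_one_s7 m p _ (by omega) (by omega),
      broom_choose_s7 n q _ (by omega) (by omega), one_mul,
      show q + p + 1 + d + 1 - (p + d - n + 1 + i) - q - 1 = n - i from by omega,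
      Nat.choose_symm (by omega : i ≤ n)]
  have s3 : ∑ j ∈ Ioc p (p + m + 1),
      broomSeq m p j * broomSeq n q (q + p + 1 + d + 1 - j)
      = ∑ e ∈ range (m + 1), Nat.choose m e * Nat.choose n (d - e) := by
    have hset : Ioc p (p + m + 1) = Ico (p + 1) (p + m + 2) := by
      ext x; simp [Finset.mem_Ioc, Finset.mem_Ico]; omega
    rw [hset, Finset.sum_Ico_eq_sum_range,
      show p + m + 2 - (p + 1) = m + 1 from by omega]
    apply Finset.sum_congr rfl
    intro e he
    simp only [Finset.mem_range] at he
    rw [broom_choose_s7 m p _ (by omega) (by omega),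
      show p + 1 + e - p - 1 = e from by omega,
      show q + p + 1 + d + 1 - (p + 1 + e) = q + 1 + d - e from by omega,
      broom_val n q d e (by omega) hd]
  rw [s1, s2, s3, s4]
  omega

lemma sum_shift2 (m : ℕ) (hm : 1 ≤ m) (f : ℕ → ℕ) :
    ∑ e ∈ Finset.range (m + 1), f e
      = (∑ e ∈ Finset.range (m - 1), f (e + 2)) + f 1 + f 0 := by
  obtain ⟨k, rfl⟩ : ∃ k, m = k + 1 := ⟨m - 1, by omega⟩
  rw [Finset.sum_range_succ', Finset.sum_range_succ']
  simp [add_assoc]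

theorem convSeq_two_differences (m n p q : ℕ) (hn : 2 ≤ n) (hmn : n ≤ m)
    (hp1 : 1 ≤ p) (hq1 : 1 ≤ q) (hq : m ≤ q) (hp : n ≤ p) :
    (convSeq m n p q (q + p + 2) : ℤ) - convSeq m n p q (q + p + 1) = -1 ∧
    (convSeq m n p q (q + p + 3) : ℤ) - convSeq m n p q (q + p + 2) =
      (m : ℤ) * n - m - n := by
  have h1 := convSeq_val m n p q 0 (by omega) hp hq
  have h2 := convSeq_val m n p q 1 (by omega) hp hq
  have h3 := convSeq_val m n p q 2 hn hp hq
  rw [show q + p + 1 + 1 = q + p + 2 from rfl] at h2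
  rw [show q + p + 1 + 2 = q + p + 3 from rfl] at h3
  rw [show q + p + 1 + 0 = q + p + 1 from rfl] at h1
  -- evaluate the binomial sums
  have hA1 : (∑ i ∈ range n, Nat.choose n i) + 1 = 2 ^ n := by
    have h := Nat.sum_range_choose n
    rw [Finset.sum_range_succ, Nat.choose_self] at h
    omega
  have hA2 : (∑ i ∈ range (n - 1), Nat.choose n i) + n = ∑ i ∈ range n, Nat.choose n i := by
    have h : ∑ i ∈ range ((n - 1) + 1), Nat.choose n i
        = (∑ i ∈ range (n - 1), Nat.choose n i) + Nat.choose n (n - 1) :=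
      Finset.sum_range_succ _ _
    rw [show n - 1 + 1 = n from by omega,
      Nat.choose_symm (by omega : 1 ≤ n), Nat.choose_one_right] at h
    omega
  have hA3 : (∑ i ∈ range (n - 2), Nat.choose n i) + Nat.choose n 2
      = ∑ i ∈ range (n - 1), Nat.choose n i := by
    have h : ∑ i ∈ range ((n - 2) + 1), Nat.choose n i
        = (∑ i ∈ range (n - 2), Nat.choose n i) + Nat.choose n (n - 2) :=
      Finset.sum_range_succ _ _
    rw [show n - 2 + 1 = n - 1 from by omega,
      Nat.choose_symm (by omega : 2 ≤ n)] at h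
    omega
  have hB0 : (∑ e ∈ range (m + 1), Nat.choose m e * Nat.choose n (0 - e)) = 2 ^ m := by
    rw [← Nat.sum_range_choose m]
    apply Finset.sum_congr rfl
    intro e _
    rw [Nat.zero_sub, Nat.choose_zero_right, mul_one]
  have hX : (∑ e ∈ range (m - 1), Nat.choose m (e + 2)) + m + 1 = 2 ^ m := by
    have h := Nat.sum_range_choose m
    rw [sum_shift2 m (by omega) _, Nat.choose_one_right, Nat.choose_zero_right] at h
    omega
  have hY : (∑ e ∈ range m, Nat.choose m (e + 1)) + 1 = 2 ^ m := by
    have h := Nat.sum_range_choose m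
    rw [Finset.sum_range_succ', Nat.choose_zero_right] at h
    omega
  have hB1 : (∑ e ∈ range (m + 1), Nat.choose m e * Nat.choose n (1 - e))
      = (∑ e ∈ range m, Nat.choose m (e + 1)) + n := by
    rw [Finset.sum_range_succ', Nat.choose_zero_right, Nat.choose_one_right, one_mul]
    congr 1
    apply Finset.sum_congr rfl
    intro e _
    rw [show (1 : ℕ) - (e + 1) = 0 from by omega, Nat.choose_zero_right, mul_one]
  have hB2 : (∑ e ∈ range (m + 1), Nat.choose m e * Nat.choose n (2 - e))
      = (∑ e ∈ range (m - 1), Nat.choose m (e + 2)) + m * n + Nat.choose n 2 := by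
    rw [sum_shift2 m (by omega) _, Nat.choose_one_right, Nat.choose_zero_right, one_mul,
      show (2 : ℕ) - 1 = 1 from rfl, Nat.choose_one_right]
    congr 2
    apply Finset.sum_congr rfl
    intro e _
    rw [show (2 : ℕ) - (e + 2) = 0 from by omega, Nat.choose_zero_right, mul_one]
  simp only [Nat.sub_zero] at h1
  rw [hB0] at h1
  rw [hB1] at h2
  rw [hB2] at h3
  have key1 : convSeq m n p q (q + p + 1) = convSeq m n p q (q + p + 2) + 1 := by
    omega
  have key2 : convSeq m n p q (q + p + 3) + m + n
      = convSeq m n p q (q + p + 2) + m * n := by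
    omega
  constructor
  · omega
  · have hk := congrArg (Nat.cast : ℕ → ℤ) key2
    push_cast at hk
    linarith
end

section
/- For every integer m ≥ 0, the finite integer sequence s_{m,j} = binomial(m, j) − binomial(m, j−1), for 0 ≤ j ≤ ⌊m/2⌋, is unimodal. -/
/-- A finite integer sequence `c_0, …, c_N` is unimodal if for some `k ≤ N` it is
nondecreasing up to `k` and nonincreasing from `k` to `N`. -/
def FinUnimodal (N : ℕ) (c : ℕ → ℤ) : Prop :=
  ∃ k, k ≤ N ∧ (∀ j, j < k → c j ≤ c (j + 1)) ∧ (∀ j, k ≤ j → j < N → c (j + 1) ≤ c j)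

lemma chooseZ_natCast (m j : ℕ) : chooseZ m (j : ℤ) = (m.choose j : ℤ) := by
  simp [chooseZ]

lemma choose_id1 (m j : ℕ) (hj : j ≤ m) :
    ((j : ℤ) + 1) * (m.choose (j+1) : ℤ) = ((m : ℤ) - j) * (m.choose j : ℤ) := by
  have h := congrArg (Nat.cast : ℕ → ℤ) (Nat.choose_succ_right_eq m j)
  push_cast [Nat.cast_sub hj] at h
  linarith

lemma choose_id2 (m j : ℕ) (hj : j ≤ m) :
    ((m : ℤ) - j + 1) * chooseZ m ((j : ℤ) - 1) = (j : ℤ) * (m.choose j : ℤ) := by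
  cases j with
  | zero => simp [chooseZ]
  | succ i =>
    have hcast : ((i + 1 : ℕ) : ℤ) - 1 = (i : ℤ) := by push_cast; ring
    rw [hcast, chooseZ_natCast]
    have hi : i ≤ m := by omega
    have h := congrArg (Nat.cast : ℕ → ℤ) (Nat.choose_succ_right_eq m i)
    push_cast [Nat.cast_sub hi] at h
    push_cast
    linarith

lemma key_identity (m j : ℕ) (hj : 2 * (j + 1) ≤ m) :
    ((j : ℤ) + 1) * ((m : ℤ) - j + 1) *
      (((m.choose (j+1) : ℤ) - chooseZ m (((j+1 : ℕ) : ℤ) - 1))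
        - ((m.choose j : ℤ) - chooseZ m ((j : ℤ) - 1)))
    = (m.choose j : ℤ) * (((m : ℤ) - 2 * j) ^ 2 - ((m : ℤ) + 2)) := by
  have hjm : j ≤ m := by omega
  have h1 := choose_id1 m j hjm
  have h2 := choose_id2 m j hjm
  have hcast : ((j + 1 : ℕ) : ℤ) - 1 = (j : ℤ) := by push_cast; ring
  rw [hcast, chooseZ_natCast]
  linear_combination ((m : ℤ) - j + 1) * h1 + ((j : ℤ) + 1) * h2

theorem binomial_difference_unimodal (m : ℕ) :
    FinUnimodal (m / 2) (fun j => (Nat.choose m j : ℤ) - chooseZ m ((j : ℤ) - 1)) := by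
  have hex : ∃ j, (m - 2 * j) ^ 2 < m + 2 := by
    refine ⟨m / 2, ?_⟩
    have h1 : m - 2 * (m / 2) ≤ 1 := by omega
    calc (m - 2 * (m / 2)) ^ 2 ≤ 1 ^ 2 := Nat.pow_le_pow_left h1 2
      _ < m + 2 := by omega
  set k := Nat.find hex with hkdef
  have hk : k ≤ m / 2 := Nat.find_le (by
    have h1 : m - 2 * (m / 2) ≤ 1 := by omega
    calc (m - 2 * (m / 2)) ^ 2 ≤ 1 ^ 2 := Nat.pow_le_pow_left h1 2
      _ < m + 2 := by omega)
  refine ⟨k, hk, ?_, ?_⟩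
  · intro j hj
    have h2j : 2 * (j + 1) ≤ m := by omega
    have hP : ¬ (m - 2 * j) ^ 2 < m + 2 := Nat.find_min hex hj
    have hnat : m + 2 ≤ (m - 2 * j) ^ 2 := by omega
    have hz : ((m : ℤ) + 2) ≤ ((m : ℤ) - 2 * j) ^ 2 := by
      have h' : ((m - 2 * j : ℕ) : ℤ) = (m : ℤ) - 2 * j := by
        push_cast [Nat.cast_sub (by omega : 2 * j ≤ m)]; ring
      calc ((m : ℤ) + 2) ≤ (((m - 2 * j) ^ 2 : ℕ) : ℤ) := by exact_mod_cast Nat.cast_le.mpr hnat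
        _ = ((m : ℤ) - 2 * j) ^ 2 := by push_cast [h']; ring
    have hkey := key_identity m j h2j
    have hcpos : (0 : ℤ) ≤ (m.choose j : ℤ) := by positivity
    have hppos : (0 : ℤ) < ((j : ℤ) + 1) * ((m : ℤ) - j + 1) := by
      have : (j : ℤ) ≤ (m : ℤ) := by exact_mod_cast (by omega : j ≤ m)
      nlinarith
    simp only []
    nlinarith [hkey, mul_nonneg hcpos (sub_nonneg.mpr hz)]
  · intro j hjk hjm
    have h2j : 2 * (j + 1) ≤ m := by omega
    have hPk : (m - 2 * k) ^ 2 < m + 2 := Nat.find_spec hex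
    have hle : m - 2 * j ≤ m - 2 * k := by omega
    have hnat : (m - 2 * j) ^ 2 < m + 2 := lt_of_le_of_lt (Nat.pow_le_pow_left hle 2) hPk
    have hz : ((m : ℤ) - 2 * j) ^ 2 ≤ ((m : ℤ) + 2) := by
      have h' : ((m - 2 * j : ℕ) : ℤ) = (m : ℤ) - 2 * j := by
        push_cast [Nat.cast_sub (by omega : 2 * j ≤ m)]; ring
      calc ((m : ℤ) - 2 * j) ^ 2 = (((m - 2 * j) ^ 2 : ℕ) : ℤ) := by push_cast [h']; ring
        _ ≤ ((m : ℤ) + 2) := by exact_mod_cast Nat.cast_le.mpr (by omega : (m - 2*j)^2 ≤ m + 2)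
    have hkey := key_identity m j h2j
    have hcpos : (0 : ℤ) ≤ (m.choose j : ℤ) := by positivity
    have hppos : (0 : ℤ) < ((j : ℤ) + 1) * ((m : ℤ) - j + 1) := by
      have : (j : ℤ) ≤ (m : ℤ) := by exact_mod_cast (by omega : j ≤ m)
      nlinarith
    simp only []
    nlinarith [hkey, mul_nonneg hcpos (sub_nonneg.mpr hz)]
end

section
/- For integers m, n ≥ 1 and q ≥ 0, if p = 0 then the convolution sequence (r_i)_{i≥1} is unimodal. (This covers both the case p = q = 0 and the case p = 0 < q.) -/
/-- Shift-and-add operator: convolution with `(1, 1)`. -/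
def Dop (a : ℕ → ℕ) : ℕ → ℕ := fun i => a i + a (i - 1)

lemma choose_succ_le_of_half_le {n k : ℕ} (h : n / 2 ≤ k) :
    Nat.choose n (k + 1) ≤ Nat.choose n k := by
  rcases le_or_gt n k with hk | hk
  · rw [Nat.choose_eq_zero_of_lt (by omega)]
    exact Nat.zero_le _
  · rcases lt_or_ge (n - k - 1) (n / 2) with h2 | h2
    · have e1 : Nat.choose n (k + 1) = Nat.choose n (n - (k + 1)) :=
        (Nat.choose_symm (by omega)).symm
      have e2 : Nat.choose n k = Nat.choose n (n - k) := (Nat.choose_symm (by omega)).symm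
      have e3 : n - k = (n - (k + 1)) + 1 := by omega
      rw [e1, e2, e3]
      exact Nat.choose_le_succ_of_lt_half_left (by omega)
    · have : k + 1 = n - k := by omega
      rw [this, Nat.choose_symm (by omega)]

lemma broom_unimodal (n q : ℕ) : Unimodal (broomSeq n q) := by
  refine ⟨q + 1 + n / 2, by omega, ?_, ?_⟩
  · intro i hi hik
    simp only [broomSeq]
    rcases le_or_gt i q with h | h
    · rcases le_or_gt (i + 1) q with h' | h'
      · simp [hi, h, h']
      · have : i + 1 = q + 1 := by omega
        simp only [this]
        simp only [show ¬ (1 ≤ q + 1 ∧ q + 1 ≤ q) by omega, if_false,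
          show q + 1 ≤ q + 1 ∧ q + 1 ≤ q + n + 1 by omega, if_true]
        simp [hi, h, Nat.choose]
    · -- binomial region, i ≥ q+1, i < q+1+n/2, so i+1 ≤ q+1+n/2 ≤ q+n+1
      have hn2 : n / 2 ≤ n := Nat.div_le_self n 2
      simp only [show ¬ (1 ≤ i ∧ i ≤ q) by omega, if_false,
        show ¬ (1 ≤ i + 1 ∧ i + 1 ≤ q) by omega,
        show q + 1 ≤ i ∧ i ≤ q + n + 1 by omega, if_true,
        show q + 1 ≤ i + 1 ∧ i + 1 ≤ q + n + 1 by omega]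
      have e : i + 1 - q - 1 = (i - q - 1) + 1 := by omega
      rw [e]
      exact Nat.choose_le_succ_of_lt_half_left (by omega)
  · intro i hik
    simp only [broomSeq]
    rcases le_or_gt (i + 1) (q + n + 1) with h | h
    · have hn2 : n / 2 ≤ n := Nat.div_le_self n 2
      simp only [show ¬ (1 ≤ i ∧ i ≤ q) by omega, if_false,
        show ¬ (1 ≤ i + 1 ∧ i + 1 ≤ q) by omega,
        show q + 1 ≤ i ∧ i ≤ q + n + 1 by omega, if_true,
        show q + 1 ≤ i + 1 ∧ i + 1 ≤ q + n + 1 by omega]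
      have e : i + 1 - q - 1 = (i - q - 1) + 1 := by omega
      rw [e]
      exact choose_succ_le_of_half_le (by omega)
    · simp only [show ¬ (1 ≤ i + 1 ∧ i + 1 ≤ q) by omega, if_false,
        show ¬ (q + 1 ≤ i + 1 ∧ i + 1 ≤ q + n + 1) by omega]
      exact Nat.zero_le _

lemma unimodal_Dop {a : ℕ → ℕ} (h0 : a 0 = 0) (h : Unimodal a) : Unimodal (Dop a) := by
  obtain ⟨k, hk1, hup, hdn⟩ := h
  have hup' : ∀ i, 1 ≤ i → i < k → Dop a i ≤ Dop a (i + 1) := by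
    intro i hi hik
    simp only [Dop, Nat.add_sub_cancel]
    have h1 : a i ≤ a (i + 1) := hup i hi hik
    have h2 : a (i - 1) ≤ a i := by
      rcases Nat.eq_or_lt_of_le hi with h | h
      · rw [← h]; simp [h0]
      · have e : i - 1 + 1 = i := by omega
        have h3 := hup (i - 1) (by omega) (by omega)
        rwa [e] at h3
    omega
  have hdn' : ∀ i, k + 1 ≤ i → Dop a (i + 1) ≤ Dop a i := by
    intro i hi
    simp only [Dop, Nat.add_sub_cancel]
    have h1 : a (i + 1) ≤ a i := hdn i (by omega)
    have h2 : a i ≤ a (i - 1) := by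
      have e : i - 1 + 1 = i := by omega
      have := hdn (i - 1) (by omega)
      rwa [e] at this
    omega
  rcases le_total (Dop a (k + 1)) (Dop a k) with h | h
  · exact ⟨k, hk1, hup', fun i hi => by
      rcases Nat.eq_or_lt_of_le hi with rfl | hlt
      · exact h
      · exact hdn' i (by omega)⟩
  · exact ⟨k + 1, by omega, fun i hi hik => by
      rcases Nat.eq_or_lt_of_le (by omega : i ≤ k) with rfl | hlt
      · exact h
      · exact hup' i hi (by omega), hdn'⟩

lemma broom0 (m i : ℕ) :
    broomSeq m 0 i = if 1 ≤ i ∧ i ≤ m + 1 then Nat.choose m (i - 1) else 0 := by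
  simp only [broomSeq, show ¬ (1 ≤ i ∧ i ≤ 0) by omega, if_false, Nat.zero_add, Nat.sub_zero]

lemma broom_succ (m : ℕ) : broomSeq (m + 1) 0 = Dop (broomSeq m 0) := by
  funext i
  simp only [Dop, broom0]
  split_ifs with hA hB hC hC2 hB2 hC3 <;> try omega
  · -- 2 ≤ i ≤ m+1 : Pascal
    rw [show i - 1 - 1 = i - 2 by omega, show i - 1 = (i - 2) + 1 by omega,
      Nat.choose_succ_succ, Nat.succ_eq_add_one]
    omega
  · -- i = 1
    have : i = 1 := by omega
    subst this
    simp
  · -- i = m + 2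
    have : i = m + 2 := by omega
    subst this
    norm_num [Nat.choose_self]

lemma conv_as_range (m n q : ℕ) (i : ℕ) :
    convSeq m n 0 q i = ∑ j ∈ Finset.range i, broomSeq m 0 (j + 1) * broomSeq n q (i - j) := by
  simp only [convSeq]
  rw [← Finset.Ico_add_one_right_eq_Icc, Finset.sum_Ico_eq_sum_range]
  apply Finset.sum_congr rfl
  intro j hj
  congr 2 <;> omega

lemma broom_zero_left (m q : ℕ) : broomSeq m q 0 = 0 := by
  simp [broomSeq]

lemma conv_succ (m n q : ℕ) : convSeq (m + 1) n 0 q = Dop (convSeq m n 0 q) := by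
  funext i
  rcases Nat.eq_zero_or_pos i with rfl | hi
  · simp [convSeq, Dop]
  simp only [Dop, conv_as_range, broom_succ, Dop]
  have : ∀ j ∈ Finset.range i,
      (broomSeq m 0 (j + 1) + broomSeq m 0 (j + 1 - 1)) * broomSeq n q (i - j)
      = broomSeq m 0 (j + 1) * broomSeq n q (i - j)
        + broomSeq m 0 j * broomSeq n q (i - j) := by
    intro j _
    rw [Nat.add_sub_cancel, add_mul]
  rw [Finset.sum_congr rfl this, Finset.sum_add_distrib]
  congr 1
  have e : i = (i - 1) + 1 := by omega
  rw [e, Finset.sum_range_succ', broom_zero_left, zero_mul, add_zero]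
  apply Finset.sum_congr rfl
  intro j hj
  congr 2
  omega

lemma conv_zero (n q : ℕ) : convSeq 0 n 0 q = broomSeq n q := by
  funext i
  rcases Nat.eq_zero_or_pos i with rfl | hi
  · simp [convSeq, broom_zero_left]
  rw [conv_as_range]
  have : ∀ j ∈ Finset.range i, broomSeq 0 0 (j + 1) * broomSeq n q (i - j)
      = if j = 0 then broomSeq n q i else 0 := by
    intro j _
    rcases Nat.eq_zero_or_pos j with rfl | hj
    · simp [broomSeq]
    · have : broomSeq 0 0 (j + 1) = 0 := by
        simp only [broomSeq]
        simp only [show ¬ (1 ≤ j + 1 ∧ j + 1 ≤ 0) by omega, if_false,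
          show ¬ (0 + 1 ≤ j + 1 ∧ j + 1 ≤ 0 + 0 + 1) by omega]
      rw [this, Nat.zero_mul, if_neg (by omega : ¬ j = 0)]
  rw [Finset.sum_congr rfl this, Finset.sum_ite_eq' (Finset.range i) 0]
  simp [Finset.mem_range, hi]

lemma conv_all (m n q : ℕ) : Unimodal (convSeq m n 0 q) := by
  induction m with
  | zero => rw [conv_zero]; exact broom_unimodal n q
  | succ m ih =>
      rw [conv_succ]
      exact unimodal_Dop (by simp [convSeq]) ih

theorem convSeq_unimodal_of_p_eq_zero (m n q : ℕ) (hm : 1 ≤ m) (hn : 1 ≤ n) :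
    Unimodal (convSeq m n 0 q) := by
  exact conv_all m n q
end

section
/- Let m ≥ n ≥ 1 be integers. If binomial(m+n, j) − binomial(m+n, j−1) − binomial(m, j) ≤ 0 for some integer j with 0 < j ≤ ⌊(m+n)/2⌋, then j ≥ n. -/
lemma aux_pasc (n k : ℕ) :
    Nat.choose (n + 1) (k + 1) = Nat.choose n k + Nat.choose n (k + 1) :=
  Nat.choose_succ_succ n k

/-- `choose n` is monotone below the middle. -/
lemma aux_choose_mono_left {n r s : ℕ} (hrs : r ≤ s) (hs : 2 * s ≤ n) :
    Nat.choose n r ≤ Nat.choose n s := by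
  induction s with
  | zero => simp [Nat.le_zero.mp hrs]
  | succ s ih =>
    rcases Nat.lt_or_ge r (s + 1) with h | h
    · exact le_trans (ih (by omega) (by omega))
        (Nat.choose_le_succ_of_lt_half_left (by omega))
    · have : r = s + 1 := by omega
      subst this; rfl

/-- Base case: `C(2k+4, k+1) ≥ C(2k+4, k) + (k+3)`. -/
lemma aux_base (k : ℕ) :
    Nat.choose (2 * k + 4) k + (k + 3) ≤ Nat.choose (2 * k + 4) (k + 1) := by
  induction k with
  | zero => decide
  | succ k ih =>
    have key : Nat.choose (2 * k + 5) k + (k + 4)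
        ≤ Nat.choose (2 * k + 5) (k + 1 + 1) := by
      rcases k with _ | j
      · decide
      · rw [show 2 * (j + 1) + 5 = (2 * j + 6) + 1 by omega,
          aux_pasc (2 * j + 6) j, aux_pasc (2 * j + 6) (j + 1 + 1)]
        rw [show 2 * (j + 1) + 4 = 2 * j + 6 by omega] at ih
        have m1 : Nat.choose (2 * j + 6) j ≤ Nat.choose (2 * j + 6) (j + 1) :=
          aux_choose_mono_left (by omega) (by omega)
        have m2 : Nat.choose (2 * j + 6) (j + 1 + 1)
            ≤ Nat.choose (2 * j + 6) (j + 1 + 1 + 1) :=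
          aux_choose_mono_left (by omega) (by omega)
        omega
    rw [show 2 * (k + 1) + 4 = (2 * k + 5) + 1 by omega,
      aux_pasc (2 * k + 5) k, aux_pasc (2 * k + 5) (k + 1)]
    omega

/-- Key strict inequality: for `k+2 ≤ m` and `m+k+2 ≤ N`,
    `C(N,k) + C(m,k+1) < C(N,k+1)`. -/
lemma aux_key : ∀ N k m : ℕ, k + 2 ≤ m → m + k + 2 ≤ N →
    Nat.choose N k + Nat.choose m (k + 1) < Nat.choose N (k + 1) := by
  intro N
  induction N using Nat.strong_induction_on with
  | _ N ih =>
    intro k m hkm hN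
    rcases k with _ | k
    · simp only [Nat.choose_zero_right, Nat.zero_add, Nat.choose_one_right]
      omega
    · obtain ⟨N', rfl⟩ : ∃ N', N = N' + 1 := ⟨N - 1, by omega⟩
      rcases Nat.lt_or_ge (m + k + 3) (N' + 1) with hlt | heq
      · -- N' ≥ m + k + 3 : reduce N
        have h1 := ih N' (by omega) (k + 1) m hkm (by omega)
        have m1 : Nat.choose N' k ≤ Nat.choose N' (k + 1) :=
          aux_choose_mono_left (by omega) (by omega)
        rw [aux_pasc N' k, aux_pasc N' (k + 1)]
        omega
      · have hNeq : N' = m + k + 2 := by omega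
        rcases Nat.lt_or_ge (k + 3) m with hm | hm
        · obtain ⟨m', rfl⟩ : ∃ m', m = m' + 1 := ⟨m - 1, by omega⟩
          have h1 := ih N' (by omega) (k + 1) m' (by omega) (by omega)
          have h2 := ih N' (by omega) k m' (by omega) (by omega)
          rw [aux_pasc N' k, aux_pasc N' (k + 1), aux_pasc m' (k + 1)]
          omega
        · -- m = k + 3, N = 2k + 6
          have hmeq : m = k + 3 := by omega
          subst hmeq
          have hN' : N' = 2 * k + 5 := by omega
          subst hN'
          have hc : Nat.choose (k + 3) (k + 1 + 1) = k + 3 := by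
            have h := Nat.choose_symm (show k + 1 + 1 ≤ k + 3 by omega)
            rw [show k + 3 - (k + 1 + 1) = 1 by omega] at h
            rw [← h, Nat.choose_one_right]
          rw [hc]
          have hb := aux_base (k + 1)
          rw [show 2 * (k + 1) + 4 = (2 * k + 5) + 1 by omega] at hb
          rw [aux_pasc (2 * k + 5) k, aux_pasc (2 * k + 5) (k + 1)] at hb ⊢
          omega

theorem j_ge_n_of_nonpos (m n j : ℕ) (hn : 1 ≤ n) (hmn : n ≤ m)
    (hj0 : 0 < j) (hj : j ≤ (m + n) / 2)
    (h : (Nat.choose (m + n) j : ℤ) - Nat.choose (m + n) (j - 1) - Nat.choose m j ≤ 0) :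
    n ≤ j := by
  by_contra hc
  push_neg at hc
  obtain ⟨k, rfl⟩ : ∃ k, j = k + 1 := ⟨j - 1, by omega⟩
  have key := aux_key (m + n) k m (by omega) (by omega)
  simp only [Nat.add_sub_cancel] at h
  have : ((Nat.choose (m + n) k : ℤ) + Nat.choose m (k + 1) < Nat.choose (m + n) (k + 1)) := by
    exact_mod_cast key
  linarith
end

section
/- Let m ≥ n ≥ 1 and p, q ≥ 0 be integers. If binomial(m+n, j) − binomial(m+n, j−1) − binomial(m, j) + binomial(m, j+q) ≤ 0 for some integer j with 0 < j ≤ ⌊(m+n)/2⌋, then also binomial(m+n, j) − binomial(m+n, j−1) − binomial(m, j) + binomial(m, j+q) − binomial(n, j) + binomial(n, j+p) ≤ 0. -/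
private lemma choose_mono_half {n a b : ℕ} (hab : a ≤ b) (hb : b ≤ n / 2) :
    Nat.choose n a ≤ Nat.choose n b := by
  induction b, hab using Nat.le_induction with
  | base => exact le_rfl
  | succ b hb' ih =>
      exact le_trans (ih (by omega)) (Nat.choose_le_succ_of_lt_half_left (by omega))

private lemma ratio_bound (n m i : ℕ) (hi : i + 1 ≤ m) :
    Nat.choose m (i + 1) * (m + n - i) ≤ Nat.choose (m + n) (i + 1) * (m - i) := by
  induction n with
  | zero => simp
  | succ n ih =>
      have h1 : Nat.choose (m + (n + 1)) (i + 1)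
          = Nat.choose (m + n) i + Nat.choose (m + n) (i + 1) := by
        have : m + (n + 1) = (m + n) + 1 := by ring
        rw [this, Nat.choose_succ_succ]
      have h2 : Nat.choose m i ≤ Nat.choose (m + n) i :=
        Nat.choose_le_choose _ (by omega)
      have h3 : Nat.choose m (i + 1) * (i + 1) = Nat.choose m i * (m - i) :=
        Nat.choose_succ_right_eq m i
      have h4 : Nat.choose m (i + 1) ≤ Nat.choose (m + n) i * (m - i) := by
        calc Nat.choose m (i + 1) ≤ Nat.choose m (i + 1) * (i + 1) :=
              Nat.le_mul_of_pos_right _ (by omega)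
          _ = Nat.choose m i * (m - i) := h3
          _ ≤ Nat.choose (m + n) i * (m - i) := Nat.mul_le_mul_right _ h2
      have h5 : m + (n + 1) - i = (m + n - i) + 1 := by omega
      rw [h1, h5]
      calc Nat.choose m (i + 1) * (m + n - i + 1)
          = Nat.choose m (i + 1) * (m + n - i) + Nat.choose m (i + 1) := by ring
        _ ≤ Nat.choose (m + n) (i + 1) * (m - i) + Nat.choose (m + n) i * (m - i) := by
            exact Nat.add_le_add ih h4
        _ = (Nat.choose (m + n) i + Nat.choose (m + n) (i + 1)) * (m - i) := by ring

private lemma delta_gt (m n j : ℕ) (hj0 : 1 ≤ j) (hjm : j ≤ m) (hjn : j < n) :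
    Nat.choose m j + Nat.choose (m + n) (j - 1) < Nat.choose (m + n) j := by
  obtain ⟨i, rfl⟩ : ∃ i, j = i + 1 := ⟨j - 1, by omega⟩
  have hD : 0 < m + n - i := by omega
  apply Nat.lt_of_mul_lt_mul_right (a := m + n - i)
  have h1 : Nat.choose (m + n) i * (m + n - i) = Nat.choose (m + n) (i + 1) * (i + 1) :=
    (Nat.choose_succ_right_eq (m + n) i).symm
  have h2 := ratio_bound n m i hjm
  have hpos : 0 < Nat.choose (m + n) (i + 1) := Nat.choose_pos (by omega)
  have hsimp : i + 1 - 1 = i := by omega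
  rw [hsimp]
  calc (Nat.choose m (i + 1) + Nat.choose (m + n) i) * (m + n - i)
      = Nat.choose m (i + 1) * (m + n - i) + Nat.choose (m + n) i * (m + n - i) := by ring
    _ ≤ Nat.choose (m + n) (i + 1) * (m - i) + Nat.choose (m + n) (i + 1) * (i + 1) := by
        rw [h1]; exact Nat.add_le_add_right h2 _
    _ = Nat.choose (m + n) (i + 1) * (m + 1) := by
        rw [← Nat.mul_add]; congr 1; omega
    _ < Nat.choose (m + n) (i + 1) * (m + n - i) :=
        Nat.mul_lt_mul_of_pos_left (by omega) hpos

theorem nonpos_extension (m n p q j : ℕ) (hn : 1 ≤ n) (hmn : n ≤ m)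
    (hj0 : 0 < j) (hj : j ≤ (m + n) / 2)
    (h : (Nat.choose (m + n) j : ℤ) - Nat.choose (m + n) (j - 1)
        - Nat.choose m j + Nat.choose m (j + q) ≤ 0) :
    (Nat.choose (m + n) j : ℤ) - Nat.choose (m + n) (j - 1)
        - Nat.choose m j + Nat.choose m (j + q)
        - Nat.choose n j + Nat.choose n (j + p) ≤ 0 := by
  rcases le_or_gt n (2 * j) with h2j | h2j
  · -- C(n, j+p) ≤ C(n, j)
    have key : Nat.choose n (j + p) ≤ Nat.choose n j := by
      by_cases hle : j + p ≤ n
      · have hjn : j ≤ n := by omega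
        rw [← Nat.choose_symm hle, ← Nat.choose_symm hjn]
        exact choose_mono_half (by omega) (by omega)
      · rw [Nat.choose_eq_zero_of_lt (by omega)]
        exact Nat.zero_le _
    have key' : (Nat.choose n (j + p) : ℤ) ≤ Nat.choose n j := by exact_mod_cast key
    linarith
  · -- contradiction: Δ > C(m,j)
    exfalso
    have hd := delta_gt m n j hj0 (by omega) (by omega)
    have hd' : (Nat.choose m j : ℤ) + Nat.choose (m + n) (j - 1)
        < Nat.choose (m + n) j := by exact_mod_cast hd
    have hq : (0 : ℤ) ≤ Nat.choose m (j + q) := Int.natCast_nonneg _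
    linarith
end

section
/- Let m ≥ n ≥ 1 be integers. If binomial(m+n, j) − binomial(m+n, j−1) − binomial(m, j) > 0 for some integer j with 1 < j ≤ ⌊(m+n)/2⌋, then binomial(m+n, j) − binomial(m+n, j−1) − binomial(m, j) − binomial(n, j) ≥ 0. -/
lemma choose_le_of_le_half {n a b : ℕ} (hab : a ≤ b) (hb : b ≤ n / 2) :
    n.choose a ≤ n.choose b := by
  induction b with
  | zero => interval_cases a; rfl
  | succ k ih =>
    rcases Nat.lt_or_ge a (k + 1) with h | h
    · exact (ih (by omega) (by omega)).trans
        (Nat.choose_le_succ_of_lt_half_left (by omega))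
    · have : a = k + 1 := by omega
      simp [this]

lemma base_case (j : ℕ) (hj : 2 ≤ j) :
    Nat.choose (2 * j) (j - 1) + 2 ≤ Nat.choose (2 * j) j := by
  have key : Nat.choose (2 * j) j * j = Nat.choose (2 * j) (j - 1) * (j + 1) := by
    have := Nat.choose_succ_right_eq (2 * j) (j - 1)
    have hji : j - 1 + 1 = j := by omega
    rw [hji] at this
    rw [this]
    congr 1
    omega
  have hc : 2 * j ≤ Nat.choose (2 * j) (j - 1) := by
    have h1 : Nat.choose (2 * j) 1 ≤ Nat.choose (2 * j) (j - 1) :=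
      choose_le_of_le_half (by omega) (by omega)
    simpa using h1
  nlinarith [Nat.choose_pos (show j ≤ 2 * j by omega)]

lemma aux_ineq : ∀ s m n j : ℕ, m + n ≤ s → 2 ≤ j → j ≤ n → n ≤ m → 2 * j ≤ m + n →
    Nat.choose (m + n) (j - 1) + Nat.choose m j + Nat.choose n j ≤ Nat.choose (m + n) j := by
  intro s
  induction s with
  | zero => intro m n j h0 h2 hjn hnm hj2; omega
  | succ s ih =>
    intro m n j hle h2 hjn hnm hj2
    obtain ⟨i, rfl⟩ : ∃ i, j = i + 2 := ⟨j - 2, by omega⟩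
    rcases Nat.lt_or_ge (2 * (i + 2)) (m + n) with hlt | hge
    · -- strict: 2j < m+n
      rcases Nat.lt_or_ge n m with hnm' | hnm'
      · -- n < m : reduce m
        obtain ⟨m', rfl⟩ : ∃ m', m = m' + 1 := ⟨m - 1, by omega⟩
        have e1 : m' + 1 + n = (m' + n) + 1 := by ring
        rw [e1]
        have p1 : Nat.choose (m' + n + 1) (i + 2) =
            Nat.choose (m' + n) (i + 1) + Nat.choose (m' + n) (i + 2) :=
          Nat.choose_succ_succ (m' + n) (i + 1)
        have p2 : Nat.choose (m' + n + 1) (i + 1) =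
            Nat.choose (m' + n) i + Nat.choose (m' + n) (i + 1) :=
          Nat.choose_succ_succ (m' + n) i
        have p3 : Nat.choose (m' + 1) (i + 2) =
            Nat.choose m' (i + 1) + Nat.choose m' (i + 2) :=
          Nat.choose_succ_succ m' (i + 1)
        have ih1 := ih m' n (i + 2) (by omega) (by omega) (by omega) (by omega) (by omega)
        have ih2 : Nat.choose (m' + n) i + Nat.choose m' (i + 1) ≤
            Nat.choose (m' + n) (i + 1) := by
          rcases Nat.eq_zero_or_pos i with rfl | hi
          · simp only [Nat.zero_add, Nat.choose_zero_right, Nat.choose_one_right]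
            omega
          · have h5 := ih m' n (i + 1) (by omega) (by omega) (by omega) (by omega) (by omega)
            have e5 : i + 1 - 1 = i := rfl
            rw [e5] at h5
            omega
        have e6 : i + 2 - 1 = i + 1 := rfl
        rw [e6] at ih1 ⊢
        rw [p1, p2, p3]
        omega
      · -- n = m : reduce n
        have hm : n = m := by omega
        obtain ⟨n', rfl⟩ : ∃ n', n = n' + 1 := ⟨n - 1, by omega⟩
        have e1 : m + (n' + 1) = (m + n') + 1 := by ring
        rw [e1]
        have p1 : Nat.choose (m + n' + 1) (i + 2) =
            Nat.choose (m + n') (i + 1) + Nat.choose (m + n') (i + 2) :=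
          Nat.choose_succ_succ (m + n') (i + 1)
        have p2 : Nat.choose (m + n' + 1) (i + 1) =
            Nat.choose (m + n') i + Nat.choose (m + n') (i + 1) :=
          Nat.choose_succ_succ (m + n') i
        have p3 : Nat.choose (n' + 1) (i + 2) =
            Nat.choose n' (i + 1) + Nat.choose n' (i + 2) :=
          Nat.choose_succ_succ n' (i + 1)
        have ih1 := ih m n' (i + 2) (by omega) (by omega) (by omega) (by omega) (by omega)
        have ih2 : Nat.choose (m + n') i + Nat.choose n' (i + 1) ≤
            Nat.choose (m + n') (i + 1) := by
          rcases Nat.eq_zero_or_pos i with rfl | hi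
          · simp only [Nat.zero_add, Nat.choose_zero_right, Nat.choose_one_right]
            omega
          · have h5 := ih m n' (i + 1) (by omega) (by omega) (by omega) (by omega) (by omega)
            have e5 : i + 1 - 1 = i := rfl
            rw [e5] at h5
            omega
        have e6 : i + 2 - 1 = i + 1 := rfl
        rw [e6] at ih1 ⊢
        rw [p1, p2, p3]
        omega
    · -- 2j = m+n, forces m = n = j
      have hm : m = i + 2 ∧ n = i + 2 := by omega
      obtain ⟨rfl, rfl⟩ := hm
      have := base_case (i + 2) (by omega)
      have e : i + 2 + (i + 2) = 2 * (i + 2) := by ring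
      rw [e]
      have e6 : i + 2 - 1 = i + 1 := rfl
      rw [e6] at this ⊢
      simp only [Nat.choose_self]
      omega

theorem nonneg_after_subtracting (m n j : ℕ) (hn : 1 ≤ n) (hmn : n ≤ m)
    (hj1 : 1 < j) (hj : j ≤ (m + n) / 2)
    (h : 0 < (Nat.choose (m + n) j : ℤ) - Nat.choose (m + n) (j - 1) - Nat.choose m j) :
    0 ≤ (Nat.choose (m + n) j : ℤ) - Nat.choose (m + n) (j - 1)
        - Nat.choose m j - Nat.choose n j := by
  rcases Nat.lt_or_ge n j with hnj | hnj
  · rw [Nat.choose_eq_zero_of_lt hnj]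
    push_cast
    omega
  · have key := aux_ineq (m + n) m n j le_rfl (by omega) hnj hmn (by omega)
    have := @Nat.cast_le ℤ _ _ _ |>.mpr key
    push_cast at this
    omega
end

section
/- Let m ≥ n ≥ 1 and p, q ≥ 0 be integers. If binomial(m+n, j) − binomial(m+n, j−1) − binomial(m, j) + binomial(m, j+q) > 0 for some integer j with 1 < j ≤ ⌊(m+n)/2⌋, then binomial(m+n, j) − binomial(m+n, j−1) − binomial(m, j) + binomial(m, j+q) − binomial(n, j) + binomial(n, j+p) ≥ 0. -/
private lemma lemQ : ∀ t s : ℕ, s ≤ t →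
    Nat.choose (s + 1 + t) s + Nat.choose t (s + 1) ≤ Nat.choose (s + 1 + t) (s + 1)
  | t, 0, _ => by
      simp [Nat.choose_one_right]
  | t, s + 1, h => by
      rcases eq_or_lt_of_le h with rfl | hlt
      · -- boundary s+1 = t : equality by symmetry
        have z : Nat.choose (s + 1) (s + 1 + 1) = 0 := Nat.choose_eq_zero_of_lt (by omega)
        have e : s + 1 + 1 + (s + 1) = (s + 1) + (s + 1 + 1) := by ring
        have sym := Nat.choose_symm_of_eq_add e
        omega
      · obtain ⟨t', rfl⟩ : ∃ t', t = t' + 1 := ⟨t - 1, by omega⟩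
        have h1 := lemQ t' (s + 1) (by omega)
        have h2 := lemQ (t' + 1) s (by omega)
        have h3 : Nat.choose t' (s + 1) ≤ Nat.choose (t' + 1) (s + 1) :=
          Nat.choose_le_choose _ (by omega)
        have p1 := Nat.choose_succ_succ' (s + t' + 2) s
        have p2 := Nat.choose_succ_succ' (s + t' + 2) (s + 1)
        have p3 := Nat.choose_succ_succ' t' (s + 1)
        ring_nf at h1 h2 h3 p1 p2 p3 ⊢
        omega
  termination_by t s _ => t + s
  decreasing_by all_goals omega

private lemma lemQ' (M s a : ℕ) (h1 : 2 * s + 2 ≤ M) (h2 : a + s + 1 ≤ M) :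
    Nat.choose M s + Nat.choose a (s + 1) ≤ Nat.choose M (s + 1) := by
  obtain ⟨t, rfl⟩ : ∃ t, M = s + 1 + t := ⟨M - s - 1, by omega⟩
  have := lemQ t s (by omega)
  have h3 : Nat.choose a (s + 1) ≤ Nat.choose t (s + 1) :=
    Nat.choose_le_choose _ (by omega)
  omega

private lemma doublePascal (M r : ℕ) :
    Nat.choose (M + 2) (r + 2) =
      Nat.choose M (r + 2) + 2 * Nat.choose M (r + 1) + Nat.choose M r := by
  have p1 := Nat.choose_succ_succ' (M + 1) (r + 1)
  have p2 := Nat.choose_succ_succ' M r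
  have p3 := Nat.choose_succ_succ' M (r + 1)
  ring_nf at p1 p2 p3 ⊢
  omega

private lemma catGap : ∀ k : ℕ,
    Nat.choose (2 * k + 4) (k + 1) + 2 ≤ Nat.choose (2 * k + 4) (k + 2)
  | 0 => by decide
  | k + 1 => by
      have ih := catGap k
      have mono : Nat.choose (2 * k + 4) k ≤ Nat.choose (2 * k + 4) (k + 1) :=
        Nat.choose_le_succ_of_lt_half_left (by omega)
      have e : 2 * k + 4 = (k + 1) + (k + 3) := by ring
      have sym := Nat.choose_symm_of_eq_add e
      have d1 := doublePascal (2 * k + 4) k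
      have d2 := doublePascal (2 * k + 4) (k + 1)
      ring_nf at ih mono sym d1 d2 ⊢
      omega

private lemma two_mul_choose_two : ∀ n : ℕ, 2 * Nat.choose (n + 1) 2 = (n + 1) * n
  | 0 => by decide
  | n + 1 => by
      have ih := two_mul_choose_two n
      have p := Nat.choose_succ_succ' (n + 1) 1
      have c := Nat.choose_one_right (n + 1)
      ring_nf at ih p c ⊢
      nlinarith [ih, p, c]

private lemma lemB : ∀ n k : ℕ, k + 2 ≤ n →
    Nat.choose (2 * n) (k + 1) + 2 * Nat.choose n (k + 2) ≤ Nat.choose (2 * n) (k + 2) := by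
  intro n k
  induction n with
  | zero => omega
  | succ n ih =>
      intro hn
      rcases eq_or_lt_of_le hn with hEq | hlt
      · -- base: n + 1 = k + 2
        have cg := catGap k
        have e : 2 * (n + 1) = 2 * k + 4 := by omega
        have c1 : Nat.choose (n + 1) (k + 2) = 1 := by
          rw [show n + 1 = k + 2 by omega]; exact Nat.choose_self _
        rw [e, c1]
        omega
      · have hn' : k + 2 ≤ n := by omega
        have ih' := ih hn'
        rcases Nat.eq_zero_or_pos k with rfl | hk
        · -- k = 0 : arithmetic
          have t1 := two_mul_choose_two n
          have t2 := two_mul_choose_two (2 * n + 1)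
          have c1 := Nat.choose_one_right (2 * n + 2)
          have e : 2 * (n + 1) = 2 * n + 1 + 1 := by ring
          rw [e]
          nlinarith [t1, t2, c1, hn']
        · obtain ⟨k', rfl⟩ : ∃ k', k = k' + 1 := ⟨k - 1, by omega⟩
          have d1 := doublePascal (2 * n) k'
          have d2 := doublePascal (2 * n) (k' + 1)
          have p1 := Nat.choose_succ_succ' n (k' + 2)
          have q1 : Nat.choose (2 * n) (k' + 1) + Nat.choose n (k' + 2) ≤
              Nat.choose (2 * n) (k' + 2) :=
            lemQ' (2 * n) (k' + 1) n (by omega) (by omega)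
          have mono : Nat.choose (2 * n) k' ≤ Nat.choose (2 * n) (k' + 1) :=
            Nat.choose_le_succ_of_lt_half_left (by omega)
          ring_nf at ih' d1 d2 p1 q1 mono ⊢
          omega

private lemma lemS (m n k : ℕ) (hk : k + 2 ≤ n) (hmn : n ≤ m) :
    Nat.choose (m + n) (k + 1) + Nat.choose m (k + 2) + Nat.choose n (k + 2) ≤
      Nat.choose (m + n) (k + 2) := by
  induction m, hmn using Nat.le_induction with
  | base =>
      have hB := lemB n k hk
      have e : n + n = 2 * n := by ring
      rw [e]
      omega
  | succ m hm ih =>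
      have p1 := Nat.choose_succ_succ' (m + n) (k + 1)
      have p2 := Nat.choose_succ_succ' (m + n) k
      have p3 := Nat.choose_succ_succ' m (k + 1)
      have q1 : Nat.choose (m + n) k + Nat.choose m (k + 1) ≤
          Nat.choose (m + n) (k + 1) :=
        lemQ' (m + n) k m (by omega) (by omega)
      ring_nf at ih p1 p2 p3 q1 ⊢
      omega

theorem nonneg_extension (m n p q j : ℕ) (hn : 1 ≤ n) (hmn : n ≤ m)
    (hj1 : 1 < j) (hj : j ≤ (m + n) / 2)
    (h : 0 < (Nat.choose (m + n) j : ℤ) - Nat.choose (m + n) (j - 1)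
        - Nat.choose m j + Nat.choose m (j + q)) :
    0 ≤ (Nat.choose (m + n) j : ℤ) - Nat.choose (m + n) (j - 1)
        - Nat.choose m j + Nat.choose m (j + q)
        - Nat.choose n j + Nat.choose n (j + p) := by
  rcases le_or_gt j n with hjn | hjn
  · obtain ⟨k, rfl⟩ : ∃ k, j = k + 2 := ⟨j - 2, by omega⟩
    have hS := lemS m n k (by omega) hmn
    have e : k + 2 - 1 = k + 1 := by omega
    rw [e]
    have hcast : (Nat.choose (m + n) (k + 1) : ℤ) + Nat.choose m (k + 2)
        + Nat.choose n (k + 2) ≤ Nat.choose (m + n) (k + 2) := by exact_mod_cast hS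
    have h1 : (0 : ℤ) ≤ Nat.choose m (k + 2 + q) := Int.natCast_nonneg _
    have h2 : (0 : ℤ) ≤ Nat.choose n (k + 2 + p) := Int.natCast_nonneg _
    linarith
  · have hz : Nat.choose n j = 0 := Nat.choose_eq_zero_of_lt hjn
    rw [hz]
    have h2 : (0 : ℤ) ≤ Nat.choose n (j + p) := Int.natCast_nonneg _
    push_cast
    linarith
end
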